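/- arXiv:1210.2618 — 7 statements merged into one kernel-verified Lean document; each statement's English description precedes it below -/
import Mathlib

section
/- If T(x) is the formal power series satisfying T(x) = 1 + x·T(x)^3 with T(0)=1, and A(x) is the formal power series with A(0)=0 satisfying A(x)(1-A(x))^2 = x, then A(x) = x·T(x)^2. -/
open PowerSeries

/-- The difference quotient `1 - 2 (a + b) + a² + a b + b²` of `a ↦ a (1 - a)²` has constant
coefficient `1`, hence is a unit. -/
theorem PowerSeries.eq_of_mul_one_sub_sq_eq {R : Type*} [CommRing R] {a b : R⟦X⟧}
    (ha : constantCoeff a = 0) (hb : constantCoeff b = 0)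
    (h : a * (1 - a) ^ 2 = b * (1 - b) ^ 2) : a = b := by
  have hunit : IsUnit (1 - 2 * (a + b) + (a ^ 2 + a * b + b ^ 2)) := by
    rw [isUnit_iff_constantCoeff]
    simp [ha, hb]
  have hfac : (a - b) * (1 - 2 * (a + b) + (a ^ 2 + a * b + b ^ 2)) = 0 := by
    linear_combination h
  exact sub_eq_zero.mp ((hunit.mul_left_eq_zero).mp hfac)

theorem mul_one_sub_sq_of_eq_one_add_mul_cube {R : Type*} [CommRing R] {x t : R}
    (ht : t = 1 + x * t ^ 3) : x * t ^ 2 * (1 - x * t ^ 2) ^ 2 = x := by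
  have hinv : t * (1 - x * t ^ 2) = 1 := by linear_combination ht
  linear_combination (x * (t * (1 - x * t ^ 2) + 1)) * hinv

theorem A_eq_X_mul_T_sq_general
    (T A : PowerSeries ℚ)
    (hT : T = 1 + X * T ^ 3)
    (hA0 : constantCoeff A = 0) (hA : A * (1 - A) ^ 2 = X) :
    A = X * T ^ 2 := by
  refine eq_of_mul_one_sub_sq_eq hA0 (by simp) ?_
  rw [hA, mul_one_sub_sq_of_eq_one_add_mul_cube hT]

theorem A_eq_X_mul_T_sq
    (T A : PowerSeries ℚ)
    (hT0 : constantCoeff T = 1) (hT : T = 1 + X * T ^ 3)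
    (hA0 : constantCoeff A = 0) (hA : A * (1 - A) ^ 2 = X) :
    A = X * T ^ 2 :=
  A_eq_X_mul_T_sq_general T A hT hA0 hA
end

section
/- The formal power series T(x) satisfying T(x) = 1 + x·T(x)^3 with T(0)=1 has coefficients [x^n] T(x) = (1/(2n+1)) * binomial(3n, n) for all n ≥ 0. -/
/-!
Let `θ = X d/dX` be the Euler operator. Applying `θ` to `T = 1 + X T³` once and twice expresses
`θT` and `θ²T` as rational functions of `T` with denominator a power of the unit `1 - 3XT²`;
eliminating them gives the linear equation `(4θ² + 2θ) T = X (27θ² + 27θ + 6) T`. On coefficients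
this is the recurrence `2(n+1)(2n+3) aₙ₊₁ = 3(3n+1)(3n+2) aₙ`, which `binomial(3n, n)/(2n+1)`
satisfies as well, and both sequences start at `1`.
-/

open PowerSeries

@[simp] theorem Derivation.map_ofNat {R A M : Type*} [CommSemiring R] [CommSemiring A]
    [AddCommMonoid M] [Algebra R A] [Module A M] [Module R M] (D : Derivation R A M) (n : ℕ)
    [n.AtLeastTwo] : D (ofNat(n) : A) = 0 :=
  D.map_natCast n

namespace PowerSeries

variable {R : Type*} [CommRing R]

noncomputable def eulerOp : Derivation R R⟦X⟧ R⟦X⟧ := (X : R⟦X⟧) • d⁄dX R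

theorem eulerOp_apply (f : R⟦X⟧) : eulerOp f = X * d⁄dX R f := rfl

@[simp] theorem eulerOp_X : eulerOp (X : R⟦X⟧) = X := by
  simp [eulerOp_apply]

theorem coeff_eulerOp (f : R⟦X⟧) (n : ℕ) : coeff n (eulerOp f) = n * coeff n f := by
  cases n with
  | zero => simp [eulerOp_apply]
  | succ n => rw [eulerOp_apply, coeff_succ_X_mul, coeff_derivative, mul_comm]; push_cast; rfl

end PowerSeries

section Ternary

variable {R : Type*} [CommRing R] {T : R⟦X⟧}

theorem eulerOp_mul_of_eq_one_add_X_mul_pow_three (hT : T = 1 + X * T ^ 3) :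
    eulerOp T * (1 - 3 * X * T ^ 2) = T - 1 := by
  have h := congrArg eulerOp hT
  rw [map_add, Derivation.map_one_eq_zero, Derivation.leibniz, Derivation.leibniz_pow,
    eulerOp_X] at h
  simp only [smul_eq_mul, nsmul_eq_mul] at h
  push_cast at h
  linear_combination h - hT

theorem eulerOp_eulerOp_mul_of_eq_one_add_X_mul_pow_three (hT : T = 1 + X * T ^ 3) :
    eulerOp (eulerOp T) * (1 - 3 * X * T ^ 2) =
      eulerOp T * (1 + 3 * X * T ^ 2 + 6 * X * T * eulerOp T) := by
  have h := congrArg eulerOp (eulerOp_mul_of_eq_one_add_X_mul_pow_three hT)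
  simp only [map_sub, Derivation.leibniz, Derivation.leibniz_pow, Derivation.map_one_eq_zero,
    Derivation.map_ofNat, eulerOp_X, smul_eq_mul, nsmul_eq_mul] at h
  push_cast at h
  linear_combination h

theorem eulerOp_ode_of_eq_one_add_X_mul_pow_three (hT : T = 1 + X * T ^ 3) :
    4 * eulerOp (eulerOp T) + 2 * eulerOp T =
      X * (27 * eulerOp (eulerOp T) + 27 * eulerOp T + 6 * T) := by
  have hP := eulerOp_mul_of_eq_one_add_X_mul_pow_three hT
  have hQ := eulerOp_eulerOp_mul_of_eq_one_add_X_mul_pow_three hT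
  set P := eulerOp T
  set Q := eulerOp P
  set D : R⟦X⟧ := 1 - 3 * X * T ^ 2
  have hD : IsUnit (D ^ 3) := (isUnit_iff_constantCoeff.mpr (by simp [D])).pow 3
  rw [← sub_eq_zero, ← hD.mul_right_eq_zero]
  -- the coefficient of `hT` is the quotient by `XT³ - T + 1` of what the other two leave over
  linear_combination D ^ 2 * (4 - 27 * X) * hQ
    + ((6 + 6 * X * T ^ 2 - 54 * X) * D + 6 * (4 - 27 * X) * X * T * (D * P + T - 1)) * hP
    - 6 * (-1 + 9 * X + 3 * X * T - 3 * X * T ^ 2 - 27 * X ^ 2 * T + 27 * X ^ 3 * T ^ 4) * hT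

end Ternary

theorem coeff_succ_of_eulerOp_ode {R : Type*} [CommRing R] {f : R⟦X⟧}
    (hf : 4 * eulerOp (eulerOp f) + 2 * eulerOp f =
      X * (27 * eulerOp (eulerOp f) + 27 * eulerOp f + 6 * f)) (n : ℕ) :
    2 * (n + 1) * (2 * n + 3) * coeff (n + 1) f = 3 * (3 * n + 1) * (3 * n + 2) * coeff n f := by
  have h := congrArg (coeff (n + 1)) hf
  simp only [map_add, coeff_succ_X_mul, ← map_ofNat C, coeff_C_mul, coeff_eulerOp] at h
  push_cast at h
  linear_combination h

theorem choose_three_mul_div_two_mul_add_one_recurrence (n : ℕ) :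
    2 * ((n : ℚ) + 1) * (2 * n + 3) *
        (1 / (2 * ((n + 1 : ℕ) : ℚ) + 1) * ((3 * (n + 1)).choose (n + 1) : ℚ)) =
      3 * (3 * (n : ℚ) + 1) * (3 * n + 2) *
        (1 / (2 * (n : ℚ) + 1) * ((3 * n).choose n : ℚ)) := by
  have h1 := Nat.add_one_mul_choose_eq (3 * n + 2) n
  have h2 := Nat.choose_mul_succ_eq (3 * n + 1) n
  have h3 := Nat.choose_mul_succ_eq (3 * n) n
  rw [show 3 * n + 1 + 1 = 3 * n + 2 by ring, show 3 * n + 2 - n = 2 * n + 2 by omega] at h2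
  rw [show 3 * n + 1 - n = 2 * n + 1 by omega] at h3
  rw [show 3 * (n + 1) = 3 * n + 2 + 1 by ring]
  qify at h1 h2 h3
  field_simp
  push_cast
  linear_combination
    (2 * (n : ℚ) + 3) * (-2 * (2 * n + 1) * h1 - 3 * (2 * n + 1) * h2 - 3 * (3 * n + 2) * h3)

theorem ternary_coeff_general
    (T : PowerSeries ℚ) (hT : T = 1 + X * T ^ 3) :
    ∀ n : ℕ, coeff n T = (1 / (2 * (n : ℚ) + 1)) * (Nat.choose (3 * n) n : ℚ) := by
  have hrec := coeff_succ_of_eulerOp_ode (eulerOp_ode_of_eq_one_add_X_mul_pow_three hT)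
  intro n
  induction n with
  | zero => simpa using congrArg (coeff 0) hT
  | succ n ih =>
    have hne : 2 * ((n : ℚ) + 1) * (2 * n + 3) ≠ 0 := by positivity
    apply mul_left_cancel₀ hne
    rw [hrec n, ih, choose_three_mul_div_two_mul_add_one_recurrence]

theorem ternary_coeff
    (T : PowerSeries ℚ) (hT0 : constantCoeff T = 1) (hT : T = 1 + X * T ^ 3) :
    ∀ n : ℕ, coeff n T = (1 / (2 * (n : ℚ) + 1)) * (Nat.choose (3 * n) n : ℚ) :=
  ternary_coeff_general T hT
end

section
/- Let B(x,y) be Brown's series for rooted non-separable planar maps (with b_{1,0}=1, b_{1,1}=0), and let A(x,y) satisfy A(x,y) = y·B(x,y) + y^2·B(x,y)·(A(x,y) - A(x,1))/(y-1), so that A(x,1) = u(x), where u(1-u)^2 = x and u(0)=0. Then for every n ≥ 1, [x^n] A(x,1) = (1/n)·binomial(3n-2, n-1). -/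
open PowerSeries Finset Nat

section DiagHom

variable {R : Type*} [CommRing R]

lemma coeff_eval₂X (P : Polynomial (PowerSeries R)) (m : ℕ) :
    coeff m (Polynomial.eval₂ (RingHom.id _) X P)
      = ∑ k ∈ range (m+1), coeff (m-k) (P.coeff k) := by
  rw [Polynomial.eval₂_eq_sum_range, map_sum]
  simp only [RingHom.id_apply, coeff_mul_X_pow']
  set N := max (P.natDegree + 1) (m + 1) with hN
  rw [show (∑ i ∈ range (P.natDegree + 1),
        if i ≤ m then coeff (m - i) (P.coeff i) else 0)
      = ∑ i ∈ range N, if i ≤ m then coeff (m - i) (P.coeff i) else 0 by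
    apply Finset.sum_subset (Finset.range_subset_range.mpr (le_max_left _ _))
    intro i _ hi
    rw [P.coeff_eq_zero_of_natDegree_lt (by simp at hi ⊢; omega), map_zero, ite_self]]
  rw [show (∑ i ∈ range N, if i ≤ m then coeff (m - i) (P.coeff i) else 0)
      = ∑ i ∈ range (m+1), if i ≤ m then coeff (m - i) (P.coeff i) else 0 by
    symm
    apply Finset.sum_subset (Finset.range_subset_range.mpr (le_max_right _ _))
    intro i _ hi
    rw [if_neg (by simp at hi; omega)]]
  apply Finset.sum_congr rfl
  intro i hi
  rw [if_pos (by simp at hi; omega)]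

lemma coeff_eval₂X_trunc (F : PowerSeries (PowerSeries R)) {m N : ℕ} (h : m < N) :
    coeff m (Polynomial.eval₂ (RingHom.id _) X (trunc N F))
      = ∑ k ∈ range (m+1), coeff (m-k) (coeff k F) := by
  rw [coeff_eval₂X]
  apply Finset.sum_congr rfl
  intro k hk
  rw [coeff_trunc, if_pos (by simp at hk; omega)]

/-- The diagonal "substitute the outer variable by `X`" ring homomorphism. -/
noncomputable def dHom (R : Type*) [CommRing R] : PowerSeries (PowerSeries R) →+* PowerSeries R where
  toFun F := PowerSeries.mk fun m => ∑ k ∈ range (m+1), coeff (m-k) (coeff k F)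
  map_one' := by
    ext m
    rw [coeff_mk]
    rw [Finset.sum_eq_single 0]
    · simp [coeff_one]
    · intro k hk hk0
      rw [coeff_one, if_neg hk0, map_zero]
    · simp
  map_mul' F G := by
    ext m
    rw [coeff_mk]
    have h1 : ∀ k ∈ range (m+1), coeff (m-k) (coeff k (F * G))
        = coeff (m-k) ((trunc (m+1) F * trunc (m+1) G).coeff k) := by
      intro k hk
      rw [coeff_mul_eq_coeff_trunc_mul_trunc (n := m+1) F G (by simp at hk; omega),
        ← Polynomial.coe_mul, Polynomial.coeff_coe]
    rw [Finset.sum_congr rfl h1, ← coeff_eval₂X, Polynomial.eval₂_mul, coeff_mul, coeff_mul]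
    apply Finset.sum_congr rfl
    intro p hp
    rw [coeff_mk, coeff_mk,
      ← coeff_eval₂X_trunc F (show p.1 < m+1 by simp [Finset.HasAntidiagonal.mem_antidiagonal] at hp; omega),
      ← coeff_eval₂X_trunc G (show p.2 < m+1 by simp [Finset.HasAntidiagonal.mem_antidiagonal] at hp; omega)]
  map_zero' := by
    ext m; simp
  map_add' F G := by
    ext m
    simp [coeff_mk, Finset.sum_add_distrib]

lemma coeff_dHom (F : PowerSeries (PowerSeries R)) (m : ℕ) :
    coeff m (dHom R F) = ∑ k ∈ range (m+1), coeff (m-k) (coeff k F) := by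
  simp only [dHom, RingHom.coe_mk, MonoidHom.coe_mk, OneHom.coe_mk]
  exact coeff_mk _ _

@[simp] lemma dHom_C (s : PowerSeries R) : dHom R (C s) = s := by
  ext m
  rw [coeff_dHom, Finset.sum_eq_single 0]
  · simp [coeff_C]
  · intro k hk hk0; rw [coeff_C, if_neg hk0, map_zero]
  · simp

@[simp] lemma dHom_X : dHom R (X : PowerSeries (PowerSeries R)) = X := by
  ext m
  rw [coeff_dHom]
  rcases m with _ | m
  · simp [coeff_X]
  · rw [Finset.sum_eq_single 1]
    · simp [coeff_X, coeff_one]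
    · intro k hk hk1; rw [coeff_X, if_neg hk1, map_zero]
    · intro h; simp at h

@[simp] lemma dHom_map_C (g : PowerSeries R) :
    dHom R (PowerSeries.map (C : R →+* PowerSeries R) g) = g := by
  ext m
  rw [coeff_dHom, Finset.sum_eq_single m]
  · simp [coeff_C]
  · intro k hk hkm
    rw [PowerSeries.coeff_map, coeff_C, if_neg (by simp at hk; omega)]
  · simp

end DiagHom

section Univariate

lemma fact_plus3 (k : ℕ) : (k+3)! = (k+3)*((k+2)*((k+1)*(k)!)) := by
  rw [show k+3 = (k+2)+1 by omega, Nat.factorial_succ, show k+2 = (k+1)+1 by omega,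
    Nat.factorial_succ, Nat.factorial_succ]

lemma choose_step (m : ℕ) :
    2*(2*(m:ℚ)+3)*((m:ℚ)+1) * (((3*m+4).choose (m+1) : ℕ) : ℚ)
      = 3*(3*(m:ℚ)+2)*(3*(m:ℚ)+4) * (((3*m+1).choose m : ℕ) : ℚ) := by
  have h1 : (((3*m+4).choose (m+1) : ℕ) : ℚ)
      = (((3*m+4)! : ℕ) : ℚ) / ((((m+1)! : ℕ) : ℚ) * (((2*m+3)! : ℕ) : ℚ)) := by
    rw [Nat.cast_choose ℚ (show m+1 ≤ 3*m+4 by omega), show 3*m+4 - (m+1) = 2*m+3 by omega]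
  have h2 : (((3*m+1).choose m : ℕ) : ℚ)
      = (((3*m+1)! : ℕ) : ℚ) / ((((m)! : ℕ) : ℚ) * (((2*m+1)! : ℕ) : ℚ)) := by
    rw [Nat.cast_choose ℚ (show m ≤ 3*m+1 by omega), show 3*m+1 - m = 2*m+1 by omega]
  have f1 : (3*m+4)! = (3*m+4)*((3*m+3)*((3*m+2)*(3*m+1)!)) := by
    have h := fact_plus3 (3*m+1)
    rw [show 3*m+4 = 3*m+1+3 by omega, h]
  have f2 : (2*m+3)! = (2*m+3)*((2*m+2)*(2*m+1)!) := by
    rw [show 2*m+3 = (2*m+2)+1 by omega, Nat.factorial_succ, show 2*m+2 = (2*m+1)+1 by omega,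
      Nat.factorial_succ]
  have f3 : (m+1)! = (m+1)*(m)! := Nat.factorial_succ m
  have nz1 : (((m)! : ℕ) : ℚ) ≠ 0 := Nat.cast_ne_zero.mpr (Nat.factorial_ne_zero _)
  have nz2 : ((((2*m+1))! : ℕ) : ℚ) ≠ 0 := Nat.cast_ne_zero.mpr (Nat.factorial_ne_zero _)
  have nz3 : ((((3*m+1))! : ℕ) : ℚ) ≠ 0 := Nat.cast_ne_zero.mpr (Nat.factorial_ne_zero _)
  rw [h1, h2, f1, f2, f3]
  push_cast
  have hne1 : ((m:ℚ)+1) ≠ 0 := by positivity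
  have hne3 : (2*(m:ℚ)+3) ≠ 0 := by positivity
  have hne4 : (2*(m:ℚ)+2) ≠ 0 := by positivity
  field_simp

/-- Lagrange-inversion style coefficient formula for the solution of `u(1-u)² = x`. -/
theorem coeff_u_formula (u : PowerSeries ℚ) (hu0 : constantCoeff u = 0)
    (hu : u * (1 - u) ^ 2 = X) :
    ∀ n : ℕ, 1 ≤ n → coeff n u = (1 / (n : ℚ)) * (Nat.choose (3 * n - 2) (n - 1) : ℚ) := by
  set v := d⁄dX ℚ u with hv
  set w := d⁄dX ℚ v with hw
  have hcube : u * u * u - (u * u + u * u) + u = X := by linear_combination hu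
  have hD0 := congrArg (d⁄dX ℚ) hcube
  simp only [map_add, map_sub, Derivation.leibniz, smul_eq_mul, derivative_X] at hD0
  have hq : v * (3 * u^2 - 4 * u + 1) = 1 := by linear_combination hD0
  have hq' : v * (u*u + u*u + u*u - (u + u + u + u) + 1) = 1 := by linear_combination hq
  have hD2' := congrArg (d⁄dX ℚ) hq'
  simp only [map_add, map_sub, Derivation.leibniz, smul_eq_mul, Derivation.map_one_eq_zero] at hD2'
  have hD2 : w * (3 * u^2 - 4 * u + 1) = (4 - 6 * u) * v^2 := by linear_combination hD2'
  have hqne : (3 * u^2 - 4 * u + 1 : PowerSeries ℚ) ≠ 0 := by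
    intro h
    have h0 := congrArg (constantCoeff) h
    simp only [map_add, map_sub, map_mul, map_pow, map_ofNat, map_one, map_zero, hu0] at h0
    norm_num at h0
  have hODE : (4*X - 27*X^2)*w + (2 - 27*X)*v + 3*u = 2 := by
    rw [← hu]
    apply mul_right_cancel₀ (pow_ne_zero 3 hqne)
    linear_combination
      ((4*(u*(1-u)^2) - 27*(u*(1-u)^2)^2) * (3*u^2-4*u+1)^2) * hD2 +
      ((4*(u*(1-u)^2) - 27*(u*(1-u)^2)^2)*(4-6*u)*(v*(3*u^2-4*u+1)+1)
        + (2 - 27*(u*(1-u)^2))*(3*u^2-4*u+1)^2) * hq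
  have hODE2 : C (4:ℚ)*(X*w) - C (27:ℚ)*(X*(X*w)) + C (2:ℚ)*v - C (27:ℚ)*(X*v) + C (3:ℚ)*u = C (2:ℚ) := by
    simp only [map_ofNat]
    linear_combination hODE
  have ha1 : coeff 1 u = 1 := by
    have h0 := congrArg (constantCoeff) hq
    simp only [map_add, map_sub, map_mul, map_pow, map_ofNat, map_one, hu0] at h0
    have hv0 : constantCoeff v = coeff 1 u := by
      rw [← coeff_zero_eq_constantCoeff, hv, coeff_derivative]; push_cast; ring
    rw [← hv0]
    linear_combination h0
  have hv_c : ∀ k : ℕ, coeff k v = ((k:ℚ)+1) * coeff (k+1) u := by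
    intro k; rw [hv, coeff_derivative]; push_cast; ring
  have hw_c : ∀ k : ℕ, coeff k w = ((k:ℚ)+1) * coeff (k+1) v := by
    intro k; rw [hw, coeff_derivative]; push_cast; ring
  have hXw : coeff 0 (X*w) = 0 := by
    rw [coeff_zero_eq_constantCoeff]; simp
  have hrec : ∀ n : ℕ, 1 ≤ n →
      2*((n:ℚ)+1)*(2*(n:ℚ)+1) * coeff (n+1) u = 3*(3*(n:ℚ)-1)*(3*(n:ℚ)+1) * coeff n u := by
    intro n hn
    obtain ⟨m, rfl⟩ : ∃ m, n = m + 1 := ⟨n - 1, by omega⟩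
    rcases m with _ | m
    · have h := congrArg (coeff (0+1)) hODE2
      simp only [map_add, map_sub, coeff_C_mul, coeff_succ_X_mul, coeff_C, hXw,
        hw_c, hv_c, mul_zero] at h
      push_cast at h ⊢
      norm_num at h ⊢
      linear_combination h
    · have h := congrArg (coeff (m+1+1)) hODE2
      simp only [map_add, map_sub, coeff_C_mul, coeff_succ_X_mul, coeff_C, hXw,
        hw_c, hv_c, mul_zero, Nat.add_eq_zero, and_false, if_false, one_ne_zero] at h
      push_cast at h ⊢
      linear_combination h
  intro n hn
  induction n, hn using Nat.le_induction with
  | base => simpa using ha1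
  | succ n hn ih =>
    obtain ⟨m, rfl⟩ : ∃ m, n = m + 1 := ⟨n - 1, by omega⟩
    have hr := hrec (m+1) (by omega)
    rw [show 3*(m+1)-2 = 3*m+1 by omega, show m+1-1 = m by omega] at ih
    rw [show 3*(m+1+1)-2 = 3*m+4 by omega, show m+1+1-1 = m+1 by omega]
    have hcs := choose_step m
    have hne1 : ((m:ℚ)+1) ≠ 0 := by positivity
    have hne2 : ((m:ℚ)+2) ≠ 0 := by positivity
    have hne3 : (2*(m:ℚ)+3) ≠ 0 := by positivity
    have ih' : ((m:ℚ)+1) * coeff (m+1) u = (((3*m+1).choose m : ℕ) : ℚ) := by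
      rw [ih]; push_cast; field_simp
    have key : ((m:ℚ)+2) * coeff (m+1+1) u = (((3*m+4).choose (m+1) : ℕ) : ℚ) := by
      have h2 : (2*(2*(m:ℚ)+3)*((m:ℚ)+1)) ≠ 0 := by positivity
      apply mul_left_cancel₀ h2
      push_cast at hr
      linear_combination ((m:ℚ)+1) * hr + 3*(3*(m:ℚ)+2)*(3*(m:ℚ)+4) * ih' - hcs
    have hne2' : ((m:ℚ)+1+1) ≠ 0 := by positivity
    push_cast
    rw [eq_comm, div_mul_eq_mul_div, one_mul, div_eq_iff hne2']
    linear_combination -key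

end Univariate

/-- Enumeration of fixed points of the involution `h`:  if `A(x,y)` satisfies the
functional equation `A(x,y) = y·B(x,y) + y²·B(x,y)·(A(x,y) - A(x,1))/(y-1)` where
`B(x,y)` is Brown's series for rooted non-separable planar maps (with `B̃(x,y) = (B(x,y)-x)·y`
satisfying Brown's quadratic and `B̃(x) = u²(1-2u)`, `x = u(1-u)²`), then
`[xⁿ] A(x,1) = (1/n)·C(3n-2, n-1)`.  Bivariate series are modelled as formal power
series in `x` with polynomial coefficients in `y`. -/
theorem fixed_points_enumeration
    (u : PowerSeries ℚ) (hu0 : constantCoeff u = 0)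
    (hu : u * (1 - u) ^ 2 = X)
    (Bt : PowerSeries ℚ) (hBt : Bt = u ^ 2 * (1 - 2 * u))
    -- the embedding of univariate series into bivariate ones
    (lift : PowerSeries ℚ →+* PowerSeries (Polynomial ℚ))
    (hlift : lift = PowerSeries.map (Polynomial.C : ℚ →+* Polynomial ℚ))
    -- the variable y
    (Y : PowerSeries (Polynomial ℚ)) (hY : Y = PowerSeries.C Polynomial.X)
    -- Brown's bivariate series B(x,y), with B̃(x,y) = (B(x,y) - x)·y
    (B Btxy : PowerSeries (Polynomial ℚ))
    (hBtxy : Btxy = (B - X) * Y)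
    (hBrown : Btxy ^ 2 + (1 - Y + X * Y ^ 2 - Y * lift Bt) * Btxy
        - X * Y ^ 2 * (lift Bt + X * (1 - Y)) = 0)
    (hB1 : PowerSeries.map (Polynomial.evalRingHom (1 : ℚ)) Btxy = Bt)
    -- the bivariate series A(x,y) and its specialization A(x,1)
    (A : PowerSeries (Polynomial ℚ)) (hA0 : constantCoeff A = 0)
    (A1 : PowerSeries ℚ)
    (hA1 : A1 = PowerSeries.map (Polynomial.evalRingHom (1 : ℚ)) A)
    -- the functional equation A = y·B + y²·B·(A - A(x,1))/(y-1), cleared of denominators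
    (hfun : (Y - 1) * A = (Y - 1) * Y * B + Y ^ 2 * B * (A - lift A1)) :
    ∀ n : ℕ, 1 ≤ n →
      PowerSeries.coeff n A1
        = (1 / (n : ℚ)) * (Nat.choose (3 * n - 2) (n - 1) : ℚ) := by
  -- the root of the kernel: y₀ = 1/(1-u)
  set y0 : PowerSeries ℚ := PowerSeries.invOfUnit (1 - u) 1 with hy0def
  have hy0 : (1 - u) * y0 = 1 := by
    apply PowerSeries.mul_invOfUnit
    simp [hu0]
  -- basic nonvanishing facts
  have hXne : (X : PowerSeries ℚ) ≠ 0 := X_ne_zero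
  have hune : u ≠ 0 := by
    intro h; rw [h] at hu; simp at hu; exact hXne hu.symm
  have h1mu : (1 - u : PowerSeries ℚ) ≠ 0 := by
    intro h; rw [h, zero_mul] at hy0; exact zero_ne_one hy0
  -- the substitution homomorphism Φ : F(x,y) ↦ F(x, y₀(x))
  set ψ : Polynomial ℚ →+* PowerSeries ℚ := Polynomial.eval₂RingHom (C : ℚ →+* PowerSeries ℚ) y0 with hψ
  set Φ : PowerSeries (Polynomial ℚ) →+* PowerSeries ℚ :=
    (dHom ℚ).comp (PowerSeries.map ψ) with hΦ
  have hΦX : Φ (X : PowerSeries (Polynomial ℚ)) = X := by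
    rw [hΦ, RingHom.comp_apply, PowerSeries.map_X, dHom_X]
  have hΦY : Φ Y = y0 := by
    rw [hΦ, RingHom.comp_apply, hY, PowerSeries.map_C, dHom_C, hψ,
      Polynomial.coe_eval₂RingHom, Polynomial.eval₂_X]
  have hΦlift : ∀ g : PowerSeries ℚ, Φ (lift g) = g := by
    intro g
    rw [hΦ, RingHom.comp_apply, hlift]
    have : PowerSeries.map ψ (PowerSeries.map (Polynomial.C : ℚ →+* Polynomial ℚ) g)
        = PowerSeries.map (C : ℚ →+* PowerSeries ℚ) g := by
      ext n
      simp only [PowerSeries.coeff_map, hψ, Polynomial.coe_eval₂RingHom, Polynomial.eval₂_C]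
    rw [this, dHom_map_C]
  -- push Φ through the hypotheses
  have HB := congrArg Φ hBrown
  simp only [map_add, map_sub, map_mul, map_pow, map_one, map_zero, hΦX, hΦY, hΦlift] at HB
  have Hbtxy := congrArg Φ hBtxy
  simp only [map_mul, map_sub, hΦX, hΦY] at Hbtxy
  have Hfun := congrArg Φ hfun
  simp only [map_add, map_sub, map_mul, map_pow, map_one, hΦX, hΦY, hΦlift] at Hfun
  set b : PowerSeries ℚ := Φ Btxy
  set P : PowerSeries ℚ := Φ B
  set a : PowerSeries ℚ := Φ A
  -- evaluate the coefficients of Brown's quadratic at y = y₀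
  have c1 : (1 - y0 + X*y0^2 - y0*Bt : PowerSeries ℚ) = -2*u^2 := by
    apply mul_right_cancel₀ (pow_ne_zero 2 h1mu)
    linear_combination (-(1-u) + X*((1-u)*y0+1) - Bt*(1-u)) * hy0 + (-1 : PowerSeries ℚ) * hu
      + (-(1-u)) * hBt
  have c0 : (X*y0^2*(Bt + X*(1-y0)) : PowerSeries ℚ) = -u^4 := by
    apply mul_right_cancel₀ (pow_ne_zero 3 h1mu)
    linear_combination
      (X*Bt*(1-u)*((1-u)*y0+1) + X^2*(1-u)*((1-u)*y0+1) - X^2*(((1-u)*y0)^2+(1-u)*y0+1)) * hy0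
      + (X*(1-u)) * hBt
      + (u*(X + u*(1-u)^2) - u^2*(1-u)*(1-2*u)) * hu
  -- the quadratic becomes a perfect square at the kernel root, so b = u²
  have hsq : (b - u^2)^2 = 0 := by
    linear_combination HB - b * c1 + c0
  have hb : b = u^2 := by
    have := (pow_eq_zero_iff two_ne_zero).mp hsq
    linear_combination this
  -- hence B(x,y₀) = u(1-u)
  have hPX : P - X = u^2*(1-u) := by
    linear_combination (1-u)*hb - (1-u)*Hbtxy - (P - X)*hy0
  have hP : P = u*(1-u) := by
    linear_combination hPX - hu
  -- kernel identity: y₀² B(x,y₀) = y₀ - 1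
  have hk : y0^2 * P = y0 - 1 := by
    apply mul_right_cancel₀ (pow_ne_zero 2 h1mu)
    linear_combination (((1-u)*y0)^2) * hP + (u*(1-u)*((1-u)*y0+1) - (1-u)) * hy0
  -- the functional equation forces A1 = y₀·B(x,y₀)
  have hy1ne : y0 - 1 ≠ 0 := by
    intro h
    have h1 : y0 = 1 := by linear_combination h
    rw [h1, mul_one] at hy0
    have : u = 0 := by linear_combination -hy0
    exact hune this
  have hfin : (y0 - 1) * (y0*P - A1) = 0 := by
    linear_combination (A1 - a) * hk - Hfun
  have hsub : y0*P - A1 = 0 := by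
    rcases mul_eq_zero.mp hfin with h | h
    · exact absurd h hy1ne
    · exact h
  have hA1u : A1 = u := by
    linear_combination -hsub + y0*hP + u*hy0
  rw [hA1u]
  exact coeff_u_formula u hu0 hu
end

section
/- Suppose a family of combinatorial structures satisfies: there is exactly one structure of size 0, and every structure of size n ≥ 1 decomposes uniquely as either (F1) a single arbitrary object of weight n from a base family with b_n objects of weight n, or (F2) a pair consisting of a base object of weight n_1 ≥ 1 and a structure of size n_2 ≥ 1 with n_1 + n_2 = n, together with a choice of one of k marks where k is the root-statistic of the size-n_2 structure. If the base family has generating function B(x,y) (y marking root statistic) and structures have generating function A(x,y), then A(x,y) = y·B(x,y) + y^2·B(x,y)·(A(x,y) - A(x,1))/(y-1), where the F2 structure built from a size-n_2 structure with root statistic k_2 and a base object with root statistic k_1 contributes monomials x^{n_1+n_2}·(y^{k_1+2} + ... + y^{k_1+k_2+1}). -/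
/-!
Read off the coefficient of `x ^ n` as a polynomial `P n` in `y` (and `Q n` for `B`). The
recurrence says that `P n = y * Q n + ∑ (F2 terms)`, where a monomial `c₁ y ^ k₁` of `Q n₁` and
a monomial `c₂ y ^ k₂` of `P n₂` contribute `c₁ c₂ y ^ (k₁ + 2) (1 + y + ⋯ + y ^ (k₂ - 1))`.
Multiplying by `y - 1` telescopes each geometric sum to `y ^ (k₁ + 2) (y ^ k₂ - 1)`; summing
bilinearly gives `y ^ 2 * Q n₁ * (P n₂ - P n₂ (1))`. Since `P 0 = Q 0 = 0`, the restriction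
`n₁, n₂ ≥ 1` may be dropped, and the sum over `n₁ + n₂ = n` is the coefficient of `x ^ n` in
`y ^ 2 * B * (A - A(x, 1))`.
-/

open PowerSeries

open Finset

namespace Polynomial

section Semiring

variable {R : Type*} [Semiring R]

noncomputable def _root_.Finsupp.toPolynomial (f : ℕ →₀ R) : R[X] :=
  f.sum fun k c => C c * X ^ k

@[simp]
theorem _root_.Finsupp.toPolynomial_zero : (0 : ℕ →₀ R).toPolynomial = 0 :=
  Finsupp.sum_zero_index

theorem coeff_toPolynomial (f : ℕ →₀ R) (m : ℕ) : f.toPolynomial.coeff m = f m := by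
  simp only [Finsupp.toPolynomial, Finsupp.sum, finsetSum_coeff, coeff_C_mul_X_pow]
  rw [sum_ite_eq, ite_eq_left_iff, Finsupp.notMem_support_iff]
  exact Eq.symm

theorem coeff_X_pow_mul_geom_sum (m k j : ℕ) :
    (X ^ m * ∑ i ∈ range k, (X : R[X]) ^ i).coeff j = if m ≤ j ∧ j < m + k then 1 else 0 := by
  rw [coeff_X_pow_mul', finsetSum_coeff]
  simp only [coeff_X_pow, sum_ite_eq, mem_range]
  grind

noncomputable def markedProduct (f g : ℕ →₀ R) : R[X] :=
  f.sum fun k₁ c₁ => g.sum fun k₂ c₂ => C (c₁ * c₂) * (X ^ (k₁ + 2) * ∑ i ∈ range k₂, X ^ i)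

theorem coeff_markedProduct (f g : ℕ →₀ R) (k : ℕ) :
    (markedProduct f g).coeff k = f.sum fun k₁ c₁ => g.sum fun k₂ c₂ =>
      c₁ * c₂ * (if k₁ + 2 ≤ k ∧ k ≤ k₁ + k₂ + 1 then 1 else 0) := by
  simp only [markedProduct, Finsupp.sum, finsetSum_coeff, coeff_C_mul, coeff_X_pow_mul_geom_sum]
  grind

end Semiring

section CommRing

variable {R : Type*} [CommRing R]

theorem toPolynomial_sub_C_eval_one (f : ℕ →₀ R) :
    f.toPolynomial - C (f.toPolynomial.eval 1) = f.sum fun k c => C c * (X ^ k - 1) := by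
  simp only [Finsupp.toPolynomial, Finsupp.sum, eval_finsetSum, eval_mul, eval_C, eval_pow,
    eval_X, one_pow, mul_one, map_sum, ← sum_sub_distrib, mul_sub]

theorem X_sub_one_mul_markedProduct (f g : ℕ →₀ R) :
    (X - 1) * markedProduct f g =
      X ^ 2 * (f.toPolynomial * (g.toPolynomial - C (g.toPolynomial.eval 1))) := by
  rw [toPolynomial_sub_C_eval_one, markedProduct, Finsupp.toPolynomial, Finsupp.mul_sum,
    Finsupp.sum_mul, Finsupp.mul_sum]
  refine Finsupp.sum_congr fun k₁ _ => ?_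
  rw [Finsupp.mul_sum, Finsupp.mul_sum, Finsupp.mul_sum]
  refine Finsupp.sum_congr fun k₂ _ => ?_
  rw [C_mul]
  linear_combination C (f k₁) * C (g k₂) * X ^ (k₁ + 2) * mul_geom_sum (X : R[X]) k₂

theorem X_sub_one_mul_toPolynomial_of_coeff_eq {ι : Type*} (s : Finset ι) (f g : ℕ →₀ R)
    (u v : ι → ℕ →₀ R)
    (h : ∀ k, f k = (if k = 0 then 0 else g (k - 1)) + ∑ i ∈ s,
      (u i).sum fun k₁ c₁ => (v i).sum fun k₂ c₂ =>
        c₁ * c₂ * (if k₁ + 2 ≤ k ∧ k ≤ k₁ + k₂ + 1 then 1 else 0)) :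
    (X - 1) * f.toPolynomial = (X - 1) * X * g.toPolynomial +
      X ^ 2 * ∑ i ∈ s,
        (u i).toPolynomial * ((v i).toPolynomial - C ((v i).toPolynomial.eval 1)) := by
  have hf : f.toPolynomial = X * g.toPolynomial + ∑ i ∈ s, markedProduct (u i) (v i) := by
    ext k
    simp only [coeff_add, finsetSum_coeff, coeff_toPolynomial, coeff_markedProduct, h k]
    cases k <;> simp [coeff_toPolynomial]
  simp only [hf, mul_add, mul_sum, X_sub_one_mul_markedProduct]
  ring

end CommRing

end Polynomial

theorem PowerSeries.C_X_sub_one_mul_eq_of_coeff {R : Type*} [CommRing R]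
    (A B : PowerSeries (Polynomial R))
    (h : ∀ n, (Polynomial.X - 1) * coeff n A = (Polynomial.X - 1) * Polynomial.X * coeff n B +
      Polynomial.X ^ 2 * ∑ p ∈ antidiagonal n,
        coeff p.1 B * (coeff p.2 A - Polynomial.C ((coeff p.2 A).eval 1))) :
    (C Polynomial.X - 1) * A = (C Polynomial.X - 1) * C Polynomial.X * B +
      C Polynomial.X ^ 2 * B * (A - map ((Polynomial.C : R →+* Polynomial R).comp
        (Polynomial.evalRingHom 1)) A) := by
  have hC : (C Polynomial.X - 1 : PowerSeries (Polynomial R)) = C (Polynomial.X - 1) := by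
    rw [map_sub, map_one]
  rw [hC, ← map_mul, ← map_pow, mul_assoc]
  refine PowerSeries.ext fun n => ?_
  rw [map_add, coeff_C_mul, coeff_C_mul, coeff_C_mul, coeff_mul]
  simpa only [map_sub, coeff_map, RingHom.comp_apply, Polynomial.coe_evalRingHom] using h n

/-- Abstract derivation of the functional equation
`A(x,y) = y·B(x,y) + y²·B(x,y)·(A(x,y) - A(x,1))/(y-1)` from the F1/F2 coefficient
recurrence: `a_{n,k} = b_{n,k-1} + ∑_{n₁+n₂=n, n₁,n₂≥1} ∑_{k₁+j+1=k, 1≤j≤k₂} b_{n₁,k₁}·a_{n₂,k₂}`.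
Bivariate series are modelled as power series in `x` with polynomial coefficients in `y`. -/
theorem functional_equation_from_structure
    (a b : ℕ → (ℕ →₀ ℚ))
    (A B : PowerSeries (Polynomial ℚ))
    (hA : ∀ n, PowerSeries.coeff n A
        = (a n).sum fun k c => Polynomial.C c * Polynomial.X ^ k)
    (hB : ∀ n, PowerSeries.coeff n B
        = (b n).sum fun k c => Polynomial.C c * Polynomial.X ^ k)
    (ha0 : a 0 = 0) (hb0 : b 0 = 0)
    (hrec : ∀ n, 1 ≤ n → ∀ k,
      a n k = (if k = 0 then 0 else b n (k - 1))
        + ∑ p ∈ (Finset.HasAntidiagonal.antidiagonal n).filter (fun p => 1 ≤ p.1 ∧ 1 ≤ p.2),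
            (b p.1).sum fun k₁ c₁ => (a p.2).sum fun k₂ c₂ =>
              c₁ * c₂ * (if k₁ + 2 ≤ k ∧ k ≤ k₁ + k₂ + 1 then 1 else 0)) :
    -- the variable y and the specialization A(x,1)
    ∀ (Y : PowerSeries (Polynomial ℚ)), Y = PowerSeries.C Polynomial.X →
    ∀ (A1 : PowerSeries (Polynomial ℚ)),
      A1 = PowerSeries.map ((Polynomial.C : ℚ →+* Polynomial ℚ).comp
              (Polynomial.evalRingHom (1 : ℚ))) A →
    (Y - 1) * A = (Y - 1) * Y * B + Y ^ 2 * B * (A - A1) := by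
  rintro Y rfl A1 rfl
  refine C_X_sub_one_mul_eq_of_coeff A B fun n => ?_
  have hA' : ∀ n, coeff n A = (a n).toPolynomial := hA
  have hB' : ∀ n, coeff n B = (b n).toPolynomial := hB
  simp only [hA', hB']
  rcases n.eq_zero_or_pos with rfl | hn
  · simp [ha0, hb0]
  rw [Polynomial.X_sub_one_mul_toPolynomial_of_coeff_eq _ _ _ _ _ (hrec n hn),
    sum_filter_of_ne]
  rintro ⟨i, j⟩ - hne
  dsimp only at hne ⊢
  constructor <;> refine Nat.one_le_iff_ne_zero.2 fun h => hne ?_ <;> simp [h, ha0, hb0]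
end

section
/- If u(x) is the formal power series with u(0)=0 satisfying u(1-u)^2 = x, then the series B̃(x) = u(x)^2·(1-2u(x)) has nonnegative integer coefficients and its first coefficients are [x^2]B̃ = 1, [x^3]B̃ = 2, [x^4]B̃ = 6, [x^5]B̃ = 22. -/
/-!
Put `z = u / (1 - u)`. Then `1 + z = (1 - u)⁻¹`, so `z = X * (1 + z) ^ 3`, and this recursion shows
that `z` has nonnegative integer coefficients. In terms of `z`, `B̃ = X * (z - z ^ 2)`, which
therefore has integer coefficients; and differentiating `u * (1 - u) ^ 2 = X` gives `B̃' = 2 * z`,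
i.e. `(n + 1) [X^(n+1)] B̃ = 2 [X^n] z ≥ 0`. The small coefficients follow from
`z ≡ X + 3 X² + 12 X³ + 55 X⁴ mod X⁵`.
-/

open PowerSeries

namespace PowerSeries

section CommSemiring

variable {R : Type*} [CommSemiring R]

def coeffLESubsemiring (S : Subsemiring R) (n : ℕ) : Subsemiring R⟦X⟧ where
  carrier := {f | ∀ k ≤ n, coeff k f ∈ S}
  zero_mem' _ _ := by simp
  one_mem' k _ := by
    rw [coeff_one]
    split_ifs
    exacts [S.one_mem, S.zero_mem]
  add_mem' hf hg k hk := by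
    rw [map_add]
    exact S.add_mem (hf k hk) (hg k hk)
  mul_mem' hf hg k hk := by
    rw [coeff_mul]
    refine S.sum_mem fun p hp => S.mul_mem (hf _ ?_) (hg _ ?_)
    · exact (Finset.HasAntidiagonal.antidiagonal.fst_le hp).trans hk
    · exact (Finset.HasAntidiagonal.antidiagonal.snd_le hp).trans hk

theorem mem_coeffLESubsemiring_bot_of_eq_X_mul_one_add_pow {z : R⟦X⟧} {d : ℕ}
    (hz : z = X * (1 + z) ^ d) (n : ℕ) : z ∈ coeffLESubsemiring ⊥ n := by
  induction n with
  | zero =>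
    intro k hk
    rw [Nat.le_zero.1 hk, hz, coeff_zero_X_mul]
    exact zero_mem _
  | succ n ih =>
    intro k hk
    rcases Nat.of_le_succ hk with hk | rfl
    · exact ih k hk
    · rw [hz, coeff_succ_X_mul]
      exact pow_mem (add_mem (one_mem _) ih) d n le_rfl

end CommSemiring

section CommRing

variable {R : Type*} [CommRing R]

theorem X_pow_dvd_of_eq_X_mul_mul_add {d q r : R⟦X⟧} {m : ℕ}
    (h : d = X * q * d + X ^ m * r) : X ^ m ∣ d := by
  suffices ∀ k ≤ m, X ^ k ∣ d from this m le_rfl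
  intro k
  induction k with
  | zero => exact fun _ => one_dvd d
  | succ k ih =>
    intro hk
    obtain ⟨e, he⟩ := ih (Nat.le_of_succ_le hk)
    rw [h]
    refine dvd_add ⟨q * e, by rw [he]; ring⟩ ⟨X ^ (m - (k + 1)) * r, ?_⟩
    rw [← mul_assoc, ← pow_add, Nat.add_sub_cancel' hk]

theorem coeff_of_eq_X_mul_one_add_pow_three {z : R⟦X⟧} (hz : z = X * (1 + z) ^ 3) :
    coeff 1 z = 1 ∧ coeff 2 z = 3 ∧ coeff 3 z = 12 ∧ coeff 4 z = 55 := by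
  set p : R⟦X⟧ := X + 3 * X ^ 2 + 12 * X ^ 3 + 55 * X ^ 4
  have hzp : X ^ 5 ∣ z - p := by
    -- `r = (X * (1 + p) ^ 3 - p) / X ^ 5`
    refine X_pow_dvd_of_eq_X_mul_mul_add (q := (1 + z) ^ 2 + (1 + z) * (1 + p) + (1 + p) ^ 2)
      (r := 273 + 609 * X + 1830 * X ^ 2 + 5706 * X ^ 3 + 15816 * X ^ 4 + 22683 * X ^ 5
        + 50985 * X ^ 6 + 108900 * X ^ 7 + 166375 * X ^ 8) ?_
    linear_combination hz
  have hcoeff (n : ℕ) (hn : n < 5) : coeff n z = coeff n p :=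
    sub_eq_zero.1 (by rw [← map_sub]; exact X_pow_dvd_iff.1 hzp n hn)
  simp [hcoeff, p, coeff_X_pow, coeff_X, ← map_ofNat C]

theorem coeff_succ_mul_eq_two_mul_coeff {b z : R⟦X⟧} (hb' : d⁄dX R b = 2 * z) (n : ℕ) :
    coeff (n + 1) b * (n + 1) = 2 * coeff n z := by
  rw [← coeff_derivative, hb', ← map_ofNat C, coeff_C_mul]

variable {u z : R⟦X⟧}

theorem one_add_mul_one_sub_eq_one (hz : z * (1 - u) = u) : (1 + z) * (1 - u) = 1 := by
  linear_combination hz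

theorem eq_X_mul_one_add_pow_three (hu : u * (1 - u) ^ 2 = X) (hz : z * (1 - u) = u) :
    z = X * (1 + z) ^ 3 := by
  linear_combination (1 + z) ^ 3 * hu
    + (1 - u * (1 + z) * ((1 + z) * (1 - u) + 1)) * one_add_mul_one_sub_eq_one hz

theorem sq_mul_one_sub_two_mul_eq_X_mul_sub_sq (hu : u * (1 - u) ^ 2 = X)
    (hz : z * (1 - u) = u) : u ^ 2 * (1 - 2 * u) = X * (z - z ^ 2) := by
  linear_combination z * (1 - z) * hu - (u * (1 - u) * (1 - z) - u ^ 2) * hz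

theorem derivative_mul_one_sub_mul_one_sub_three_mul (hu : u * (1 - u) ^ 2 = X) :
    d⁄dX R u * (1 - u) * (1 - 3 * u) = 1 := by
  have h := congrArg (d⁄dX R) hu
  simp only [Derivation.leibniz, Derivation.leibniz_pow, map_sub, Derivation.map_one_eq_zero,
    derivative_X, smul_eq_mul, nsmul_eq_mul] at h
  linear_combination h

theorem derivative_sq_mul_one_sub_two_mul (hu : u * (1 - u) ^ 2 = X) (hz : z * (1 - u) = u) :
    d⁄dX R (u ^ 2 * (1 - 2 * u)) = 2 * z := by
  have h : d⁄dX R (u ^ 2 * (1 - 2 * u)) = 2 * u * d⁄dX R u * (1 - 3 * u) := by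
    rw [show u ^ 2 * (1 - 2 * u) = u ^ 2 - (u ^ 3 + u ^ 3) by ring]
    simp only [map_sub, map_add, Derivation.leibniz_pow, smul_eq_mul, nsmul_eq_mul]
    ring
  linear_combination h - 2 * u * d⁄dX R u * (1 - 3 * u) * one_add_mul_one_sub_eq_one hz
    + 2 * u * (1 + z) * derivative_mul_one_sub_mul_one_sub_three_mul hu - 2 * hz

end CommRing

theorem exists_nat_coeff_eq_of_derivative_eq_two_mul {b z : ℚ⟦X⟧}
    (hz : ∀ n, z ∈ coeffLESubsemiring ⊥ n) (hb : b = X * (z - z ^ 2))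
    (hb' : d⁄dX ℚ b = 2 * z) (n : ℕ) : ∃ m : ℕ, coeff n b = m := by
  rcases n with _ | n
  · exact ⟨0, by simp [hb]⟩
  obtain ⟨a, ha⟩ := Subsemiring.mem_bot.1 (hz n n le_rfl)
  obtain ⟨c, hc⟩ := Subsemiring.mem_bot.1 (pow_mem (hz n) 2 n le_rfl)
  have hbn : coeff (n + 1) b = a - c := by rw [hb, coeff_succ_X_mul, map_sub, ha, hc]
  have hca : (c : ℚ) ≤ a := by
    have h := coeff_succ_mul_eq_two_mul_coeff hb' n
    rw [hbn, ← ha] at h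
    exact sub_nonneg.1 (nonneg_of_mul_nonneg_left (by rw [h]; positivity) (by positivity))
  exact ⟨a - c, by rw [hbn, Nat.cast_sub (by exact_mod_cast hca)]⟩

end PowerSeries

theorem Btilde_coeffs
    (u : PowerSeries ℚ) (hu0 : constantCoeff u = 0)
    (hu : u * (1 - u) ^ 2 = X) :
    let Bt := u ^ 2 * (1 - 2 * u)
    (∀ n : ℕ, ∃ m : ℕ, coeff n Bt = (m : ℚ)) ∧
    coeff 2 Bt = 1 ∧ coeff 3 Bt = 2 ∧ coeff 4 Bt = 6 ∧ coeff 5 Bt = 22 := by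
  intro Bt
  obtain ⟨z, hz⟩ : ∃ z : ℚ⟦X⟧, z * (1 - u) = u :=
    ⟨u * (1 - u)⁻¹, by rw [mul_assoc, PowerSeries.inv_mul_cancel _ (by simp [hu0]), mul_one]⟩
  have hzX := eq_X_mul_one_add_pow_three hu hz
  have hBt' : d⁄dX ℚ Bt = 2 * z := derivative_sq_mul_one_sub_two_mul hu hz
  refine ⟨exists_nat_coeff_eq_of_derivative_eq_two_mul
    (mem_coeffLESubsemiring_bot_of_eq_X_mul_one_add_pow hzX)
    (sq_mul_one_sub_two_mul_eq_X_mul_sub_sq hu hz) hBt', ?_⟩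
  obtain ⟨h1, h2, h3, h4⟩ := coeff_of_eq_X_mul_one_add_pow_three hzX
  have e1 := coeff_succ_mul_eq_two_mul_coeff hBt' 1
  have e2 := coeff_succ_mul_eq_two_mul_coeff hBt' 2
  have e3 := coeff_succ_mul_eq_two_mul_coeff hBt' 3
  have e4 := coeff_succ_mul_eq_two_mul_coeff hBt' 4
  norm_num [h1, h2, h3, h4] at e1 e2 e3 e4
  exact ⟨by linarith, by linarith, by linarith, by linarith⟩
end

section
/- Let a_n = (1/n)·binomial(3n-2, n-1) for n ≥ 1 and t_n = (1/(2n+1))·binomial(3n, n) for n ≥ 0. Then for all n ≥ 1, a_n = sum over i + j = n - 1 of t_i · t_j. -/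
/-!
The Raney numbers `R_r(n) = r / (3n + r) * C(3n + r, n)` are the coefficients of `T^r`, where
`T = 1 + x T^3`, so `t_n = R_1(n)`, `a_n = R_2(n - 1)`, and the identity is the case `a = c = 1`
of the convolution `R_a * R_c = R_{a+c}`. That follows by induction on `n` and `a` from
`R_{r+1}(n+1) = R_r(n+1) + R_{r+3}(n)`, the coefficient form of `T^{r+1} = T^r + x T^{r+3}`,
which is a Pascal-type binomial identity.
-/

open Finset

/-- The coefficient of `x^n` in `B^r`, where `B = 1 + x B^p`. The case `n = 0` is split off
because the formula reads `0 / 0` at `r = 0`. -/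
def raney (p r n : ℕ) : ℚ :=
  if n = 0 then 1 else (r : ℚ) / (p * n + r : ℕ) * (p * n + r).choose n

lemma raney_zero_right (p r : ℕ) : raney p r 0 = 1 := by
  simp [raney]

lemma raney_zero_left (p : ℕ) {n : ℕ} (hn : n ≠ 0) : raney p 0 n = 0 := by
  simp [raney, hn]

lemma raney_of_ne_zero (p : ℕ) {r : ℕ} (hr : r ≠ 0) (n : ℕ) :
    raney p r n = (r : ℚ) / (p * n + r : ℕ) * (p * n + r).choose n := by
  rcases eq_or_ne n 0 with rfl | hn
  · simp [raney, hr]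
  · simp [raney, hn]

lemma raney_succ_succ (p r n : ℕ) :
    raney p (r + 1) (n + 1) = raney p r (n + 1) + raney p (r + p) n := by
  rcases Nat.eq_zero_or_pos (r + p) with hrp | hrp
  · obtain ⟨rfl, rfl⟩ : r = 0 ∧ p = 0 := by omega
    cases n <;> simp [raney, Nat.choose_eq_zero_of_lt]
  have pascal := congrArg (Nat.cast : ℕ → ℚ) (Nat.choose_succ_succ' (p * n + r + p) n)
  have absorb := congrArg (Nat.cast : ℕ → ℚ) (Nat.add_one_mul_choose_eq (p * n + r + p) n)
  have hN_pos : (0 : ℚ) < p * n + r + p := by exact_mod_cast (show 0 < p * n + r + p by omega)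
  rw [raney_of_ne_zero p r.succ_ne_zero, raney_of_ne_zero p hrp.ne', raney, if_neg n.succ_ne_zero,
    show p * (n + 1) + (r + 1) = p * n + r + p + 1 by ring,
    show p * (n + 1) + r = p * n + r + p by ring, show p * n + (r + p) = p * n + r + p by ring]
  push_cast at pascal absorb ⊢
  field_simp
  linear_combination (r * (p * n + r + p + 1 : ℚ)) * pascal - p * absorb

theorem sum_antidiagonal_raney_mul_raney (p n a c : ℕ) :
    ∑ x ∈ antidiagonal n, raney p a x.1 * raney p c x.2 = raney p (a + c) n := by
  induction n generalizing a c with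
  | zero => simp [raney_zero_right]
  | succ n ihn =>
    induction a with
    | zero =>
      rw [Nat.sum_antidiagonal_succ]
      simp [raney_zero_right, raney_zero_left]
    | succ a iha =>
      calc ∑ x ∈ antidiagonal (n + 1), raney p (a + 1) x.1 * raney p c x.2
          = raney p c (n + 1) + ∑ x ∈ antidiagonal n, raney p a (x.1 + 1) * raney p c x.2
              + ∑ x ∈ antidiagonal n, raney p (a + p) x.1 * raney p c x.2 := by
            simp only [Nat.sum_antidiagonal_succ, raney_zero_right, raney_succ_succ, add_mul,
              sum_add_distrib, one_mul, add_assoc]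
        _ = raney p (a + c) (n + 1) + raney p (a + c + p) n := by
            rw [← iha, ihn, Nat.sum_antidiagonal_succ, raney_zero_right, one_mul,
              show a + p + c = a + c + p by ring]
        _ = raney p (a + 1 + c) (n + 1) := by
            rw [show a + 1 + c = a + c + 1 by ring, raney_succ_succ]

lemma raney_succ_succ_eq_div_mul_choose (p r n : ℕ) :
    raney (p + 1) (r + 1) n = (r + 1) / (p * n + r + 1) * ((p + 1) * n + r).choose n := by
  have h := congrArg (Nat.cast : ℕ → ℚ) (Nat.choose_mul_succ_eq ((p + 1) * n + r) n)
  rw [show (p + 1) * n + r + 1 - n = p * n + r + 1 by rw [Nat.sub_eq_of_eq_add]; ring] at h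
  rw [raney_of_ne_zero _ r.succ_ne_zero, show (p + 1) * n + (r + 1) = (p + 1) * n + r + 1 by ring]
  push_cast at h ⊢
  field_simp
  linear_combination -h

theorem a_eq_conv_ternary (n : ℕ) (hn : 1 ≤ n) :
    (1 / (n : ℚ)) * (Nat.choose (3 * n - 2) (n - 1) : ℚ)
      = ∑ p ∈ Finset.HasAntidiagonal.antidiagonal (n - 1),
          ((1 / (2 * (p.1 : ℚ) + 1)) * (Nat.choose (3 * p.1) p.1 : ℚ))
            * ((1 / (2 * (p.2 : ℚ) + 1)) * (Nat.choose (3 * p.2) p.2 : ℚ)) := by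
  obtain ⟨m, rfl⟩ : ∃ m, n = m + 1 := ⟨n - 1, by omega⟩
  have ternary (i : ℕ) : 1 / (2 * (i : ℚ) + 1) * (3 * i).choose i = raney 3 1 i := by
    simpa using (raney_succ_succ_eq_div_mul_choose 2 0 i).symm
  have lhs : 1 / ((m : ℚ) + 1) * (3 * m + 1).choose m = raney 3 2 m := by
    rw [raney_succ_succ_eq_div_mul_choose 2 1 m]
    field_simp
    ring
  rw [show 3 * (m + 1) - 2 = 3 * m + 1 by omega, Nat.add_sub_cancel]
  push_cast
  simp only [ternary, lhs]
  exact (sum_antidiagonal_raney_mul_raney 3 m 1 1).symm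
end

section
/- If A(x) is a formal power series over ℚ with A(0) = 0 satisfying A(1-A)^2 = x, then A is the unique such power series, and its coefficients are all positive integers. -/
/-!
Since `A (1 - A)^2 = X` and `1 - A` is invertible, `A = X (1 - A)^{-2} = X ∑ₖ (k + 1) Aᵏ`.
Reading off the coefficient of `X^{m+1}` gives the recursion
`[X^{m+1}] A = ∑_{k ≤ m} (k + 1) [X^m] Aᵏ`, whose right-hand side only involves coefficients of
`A` of index at most `m`; by induction all coefficients are natural numbers, and positive from
index `1` on. Uniqueness holds because `t ↦ t (1 - t)^2` has derivative `1` at `0`, so the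
difference quotient of two solutions is a unit.
-/

open PowerSeries Finset

namespace PowerSeries

variable {R : Type*}

theorem coeff_pow_eq_zero_of_lt [CommSemiring R] {φ : R⟦X⟧} (hφ : constantCoeff φ = 0)
    {n k : ℕ} (hnk : n < k) : coeff n (φ ^ k) = 0 :=
  coeff_of_lt_order n <| (Nat.cast_lt.2 hnk).trans_le (le_order_pow_of_constantCoeff_eq_zero k hφ)

theorem coeff_pow_mem [CommSemiring R] (S : Subsemiring R) {φ : R⟦X⟧} {n : ℕ}
    (h : ∀ j ≤ n, coeff j φ ∈ S) (k : ℕ) : coeff n (φ ^ k) ∈ S := by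
  rw [coeff_pow]
  refine sum_mem fun l hl => prod_mem fun i hi => h _ ?_
  obtain ⟨hsum, -⟩ := mem_finsuppAntidiag.1 hl
  exact hsum ▸ single_le_sum (fun _ _ => Nat.zero_le _) hi

theorem eq_of_mul_one_sub_sq_eq_s18 [CommRing R] {φ ψ : R⟦X⟧} (hφ : constantCoeff φ = 0)
    (hψ : constantCoeff ψ = 0) (h : φ * (1 - φ) ^ 2 = ψ * (1 - ψ) ^ 2) : φ = ψ := by
  have hunit : IsUnit (1 - 2 * (φ + ψ) + (φ ^ 2 + φ * ψ + ψ ^ 2)) :=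
    isUnit_iff_constantCoeff.2 (by simp [hφ, hψ])
  have hfactor : (φ - ψ) * (1 - 2 * (φ + ψ) + (φ ^ 2 + φ * ψ + ψ ^ 2)) = 0 := by
    linear_combination h
  exact sub_eq_zero.1 (hunit.mul_left_eq_zero.1 hfactor)

end PowerSeries

theorem sum_range_succ_mul_pow_mul_one_sub_sq {R : Type*} [CommRing R] (a : R) (N : ℕ) :
    (∑ k ∈ range N, ((k : R) + 1) * a ^ k) * (1 - a) ^ 2
      = 1 - ((N : R) + 1) * a ^ N + N * a ^ (N + 1) := by
  induction N with
  | zero => simp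
  | succ N ih =>
    rw [sum_range_succ, add_mul, ih]
    push_cast
    ring

section

variable {R : Type*} [CommRing R] {A : R⟦X⟧}

theorem coeff_succ_eq_sum_of_mul_one_sub_sq_eq_X (hA0 : constantCoeff A = 0)
    (hA : A * (1 - A) ^ 2 = X) (m : ℕ) :
    coeff (m + 1) A = ∑ k ∈ range (m + 1), ((k : R) + 1) * coeff m (A ^ k) := by
  -- truncating `(1 - A)⁻² = ∑ (k + 1) Aᵏ` leaves error terms of order `> m + 1`
  have hgeom : X * ∑ k ∈ range (m + 1), C ((k : R) + 1) * A ^ k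
      = A - C ((m : R) + 2) * A ^ (m + 2) + C ((m : R) + 1) * A ^ (m + 3) := by
    simp only [map_add, map_natCast, map_one, map_ofNat]
    rw [← hA, mul_right_comm, mul_assoc, sum_range_succ_mul_pow_mul_one_sub_sq]
    push_cast
    ring
  have hcoeff := congrArg (coeff (m + 1)) hgeom
  simp only [coeff_succ_X_mul, map_sum, map_add (coeff (R := R) (m + 1)),
    map_sub (coeff (R := R) (m + 1)), coeff_C_mul,
    coeff_pow_eq_zero_of_lt hA0 (by omega : m + 1 < m + 2),
    coeff_pow_eq_zero_of_lt hA0 (by omega : m + 1 < m + 3), mul_zero, sub_zero, add_zero] at hcoeff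
  exact hcoeff.symm

theorem coeff_mem_natCast_rangeS (hA0 : constantCoeff A = 0)
    (hA : A * (1 - A) ^ 2 = X) (n : ℕ) : coeff n A ∈ (Nat.castRingHom R).rangeS := by
  induction n using Nat.strong_induction_on with
  | _ n ih =>
    cases n with
    | zero => simp [hA0]
    | succ m =>
      rw [coeff_succ_eq_sum_of_mul_one_sub_sq_eq_X hA0 hA]
      refine sum_mem fun k _ => mul_mem ⟨k + 1, by simp⟩ ?_
      exact coeff_pow_mem _ (fun j hj => ih j (by omega)) k

theorem coeff_pos_of_mul_one_sub_sq_eq_X [PartialOrder R] [IsStrictOrderedRing R]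
    (hA0 : constantCoeff A = 0) (hA : A * (1 - A) ^ 2 = X) {n : ℕ} (hn : 0 < n) :
    0 < coeff n A := by
  induction n, hn using Nat.le_induction with
  | base => simp [coeff_succ_eq_sum_of_mul_one_sub_sq_eq_X hA0 hA 0]
  | succ n hn ih =>
    have hnonneg : ∀ k ∈ range (n + 1), 0 ≤ ((k : R) + 1) * coeff n (A ^ k) := fun k _ => by
      obtain ⟨c, hc⟩ := coeff_pow_mem _ (fun j _ => coeff_mem_natCast_rangeS hA0 hA j) k
      rw [← hc, Nat.coe_castRingHom]
      positivity
    calc 0 < (((1 : ℕ) : R) + 1) * coeff n (A ^ 1) := by rw [pow_one]; positivity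
      _ ≤ coeff (n + 1) A := by
        rw [coeff_succ_eq_sum_of_mul_one_sub_sq_eq_X hA0 hA]
        exact single_le_sum hnonneg (mem_range.2 (by omega))

end

theorem A_unique_and_positive_integral
    (A : PowerSeries ℚ) (hA0 : constantCoeff A = 0)
    (hA : A * (1 - A) ^ 2 = X) :
    (∀ A' : PowerSeries ℚ, constantCoeff A' = 0 → A' * (1 - A') ^ 2 = X → A' = A) ∧
    (∀ n : ℕ, 1 ≤ n → ∃ m : ℕ, 0 < m ∧ coeff n A = (m : ℚ)) := by
  refine ⟨fun A' hA0' hA' => eq_of_mul_one_sub_sq_eq_s18 hA0' hA0 (hA'.trans hA.symm), ?_⟩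
  intro n hn
  obtain ⟨m, hm⟩ := coeff_mem_natCast_rangeS hA0 hA n
  have hpos := coeff_pos_of_mul_one_sub_sq_eq_X hA0 hA hn
  exact ⟨m, Nat.cast_pos.1 (hm ▸ hpos), hm.symm⟩
end
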